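/- Let F be a finite field with q elements and let k, t be integers with 1 ≤ k ≤ t. For every function g : F^{t−k} → F, the fraction of feature sets A ⊆ F with |A| = t (equivalently, the probability for a uniformly random such set) for which g(rec_k(A)) ∈ A is at most q^{t−k} · C(q, k−1) / (C(q, t) · C(t−1, k−1)). In particular, for fixed t, no algorithm can extract a single feature element from one deterministic vault record with success probability better than O(q^{−1}). -/

import Mathlib

/-!
If two `t`-sets `A, A'` have the same record `rec_k`, then `χ_A - χ_{A'}` has degree `< k`, so
`A = A'` as soon as they share `k` elements. All sets with record `r` on which `g` succeeds contain
`c = g r`; removing `c` leaves `(t-1)`-sets no two of which share `k-1` elements, so counting their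
`(k-1)`-subsets shows there are at most `C(q, k-1) / C(t-1, k-1)` of them. Summing over the
`q^(t-k)` possible records gives the bound.
-/

open Polynomial Finset

/-- The characteristic polynomial of a finite subset `A` of a field:
`χ_A(X) = ∏_{a ∈ A} (X - a)`. -/
noncomputable def charPoly {F : Type*} [Field F] (A : Finset F) : F[X] :=
  ∏ a ∈ A, (X - C a)

/-- The deterministic vault record of a feature set `A` of size `n` with
parameter `k`: the tuple of coefficients of `X^k, …, X^{n−1}` of `χ_A`. -/
noncomputable def vRec {F : Type*} [Field F] (n k : ℕ) (A : Finset F) :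
    Fin (n - k) → F :=
  fun j => (charPoly A).coeff (k + (j : ℕ))

section CharPoly

variable {F : Type*} [Field F]

lemma charPoly_monic (A : Finset F) : (charPoly A).Monic :=
  monic_prod_of_monic _ _ fun a _ => monic_X_sub_C a

lemma natDegree_charPoly (A : Finset F) : (charPoly A).natDegree = #A := by
  rw [charPoly, natDegree_prod _ _ fun a _ => X_sub_C_ne_zero a]
  simp

lemma charPoly_injective : Function.Injective (charPoly (F := F)) := fun A B h => by
  have := congrArg roots h
  rwa [charPoly, charPoly, roots_prod_X_sub_C, roots_prod_X_sub_C, Finset.val_inj] at this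

lemma eval_charPoly_eq_zero {A : Finset F} {a : F} (ha : a ∈ A) : (charPoly A).eval a = 0 := by
  rw [charPoly, eval_prod]
  exact prod_eq_zero ha (by simp)

lemma coeff_charPoly_of_card_le {A : Finset F} {i : ℕ} (hi : #A ≤ i) :
    (charPoly A).coeff i = if i = #A then 1 else 0 := by
  split_ifs with h
  · rw [h, ← natDegree_charPoly]
    exact charPoly_monic A
  · exact coeff_eq_zero_of_natDegree_lt (by rw [natDegree_charPoly]; omega)

lemma coeff_charPoly_eq_of_vRec_eq {s m i : ℕ} {B B' : Finset F} (hB : #B = s) (hB' : #B' = s)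
    (hv : vRec s m B = vRec s m B') (hi : m ≤ i) :
    (charPoly B).coeff i = (charPoly B').coeff i := by
  rcases lt_or_ge i s with his | his
  · simpa [vRec, Nat.add_sub_cancel' hi] using congrFun hv ⟨i - m, by omega⟩
  · rw [coeff_charPoly_of_card_le (hB ▸ his), coeff_charPoly_of_card_le (hB' ▸ his), hB, hB']

lemma eq_of_vRec_eq_of_subset {s m : ℕ} {B B' M : Finset F} (hB : #B = s) (hB' : #B' = s)
    (hv : vRec s m B = vRec s m B') (hM : m ≤ #M) (hMB : M ⊆ B) (hMB' : M ⊆ B') : B = B' := by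
  have hdeg : (charPoly B - charPoly B').degree < m := by
    rw [degree_lt_iff_coeff_zero]
    intro i hi
    rw [coeff_sub, sub_eq_zero]
    exact coeff_charPoly_eq_of_vRec_eq hB hB' hv hi
  refine charPoly_injective (sub_eq_zero.mp <|
    eq_zero_of_degree_lt_of_eval_finset_eq_zero M (hdeg.trans_le (by exact_mod_cast hM)) ?_)
  intro a ha
  rw [eval_sub, eval_charPoly_eq_zero (hMB ha), eval_charPoly_eq_zero (hMB' ha), sub_zero]

end CharPoly

lemma card_mul_choose_le_of_subset_unique {α : Type*} [Fintype α] [DecidableEq α]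
    {T : Finset (Finset α)} {s m : ℕ} (hT : ∀ B ∈ T, #B = s)
    (hunique : ∀ B ∈ T, ∀ B' ∈ T, ∀ M : Finset α, #M = m → M ⊆ B → M ⊆ B' → B = B') :
    #T * s.choose m ≤ (Fintype.card α).choose m := by
  have hdisj : (T : Set (Finset α)).PairwiseDisjoint (powersetCard m) := by
    intro B hB B' hB' hne
    refine disjoint_left.mpr fun M hM hM' => hne ?_
    rw [mem_powersetCard] at hM hM'
    exact hunique B hB B' hB' M hM.2 hM.1 hM'.1
  have hsized : (↑(T.biUnion (powersetCard m)) : Set (Finset α)).Sized m := by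
    intro M hM
    obtain ⟨B, -, hMB⟩ := mem_biUnion.mp hM
    exact (mem_powersetCard.mp hMB).2
  calc #T * s.choose m = ∑ B ∈ T, #(powersetCard m B) := by
        rw [sum_congr rfl fun B hB => by rw [card_powersetCard, hT B hB], sum_const, smul_eq_mul]
    _ = #(T.biUnion (powersetCard m)) := (card_biUnion hdisj).symm
    _ ≤ (Fintype.card α).choose m := hsized.card_le

section Extraction

variable {F : Type*} [Field F] [Fintype F] [DecidableEq F]

lemma card_vRec_fiber_mul_choose_le {k t : ℕ} (hk : 1 ≤ k) (c : F) (r : Fin (t - k) → F) :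
    #{A : Finset F | #A = t ∧ c ∈ A ∧ vRec t k A = r} * (t - 1).choose (k - 1)
      ≤ (Fintype.card F).choose (k - 1) := by
  set T : Finset (Finset F) := {A | #A = t ∧ c ∈ A ∧ vRec t k A = r}
  have hmem : ∀ A ∈ T, #A = t ∧ c ∈ A ∧ vRec t k A = r := fun A hA => (mem_filter.mp hA).2
  have hinj : Set.InjOn (fun A : Finset F => A.erase c) T :=
    (erase_injOn' c).mono fun A hA => (hmem A hA).2.1
  rw [← card_image_of_injOn hinj]
  refine card_mul_choose_le_of_subset_unique ?_ ?_
  · simp only [mem_image]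
    rintro _ ⟨A, hA, rfl⟩
    rw [card_erase_of_mem (hmem A hA).2.1, (hmem A hA).1]
  · simp only [mem_image]
    rintro _ ⟨A, hA, rfl⟩ _ ⟨A', hA', rfl⟩ M hM hMA hMA'
    have hcM : c ∉ M := fun h => by simpa using hMA h
    obtain ⟨hAt, hcA, hAr⟩ := hmem A hA
    obtain ⟨hA't, hcA', hA'r⟩ := hmem A' hA'
    congr 1
    refine eq_of_vRec_eq_of_subset hAt hA't (hAr.trans hA'r.symm)
      (by rw [card_insert_of_notMem hcM, hM]; omega)
      (insert_subset hcA (hMA.trans (erase_subset c A)))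
      (insert_subset hcA' (hMA'.trans (erase_subset c A')))

lemma card_extract_mul_choose_le {k t : ℕ} (hk : 1 ≤ k) (g : (Fin (t - k) → F) → F) :
    #{A : Finset F | #A = t ∧ g (vRec t k A) ∈ A} * (t - 1).choose (k - 1)
      ≤ Fintype.card F ^ (t - k) * (Fintype.card F).choose (k - 1) := by
  set S : Finset (Finset F) := {A | #A = t ∧ g (vRec t k A) ∈ A}
  have hfiber (r : Fin (t - k) → F) : {A ∈ S | vRec t k A = r} ⊆
      ({A : Finset F | #A = t ∧ g r ∈ A ∧ vRec t k A = r} : Finset (Finset F)) := by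
    intro A hA
    simp only [S, mem_filter, mem_univ, true_and] at hA ⊢
    exact ⟨hA.1.1, hA.2 ▸ hA.1.2, hA.2⟩
  calc #S * (t - 1).choose (k - 1)
      = ∑ r : Fin (t - k) → F, #{A ∈ S | vRec t k A = r} * (t - 1).choose (k - 1) := by
        rw [card_eq_sum_card_fiberwise fun A _ => mem_univ (vRec t k A), sum_mul]
    _ ≤ ∑ _r : Fin (t - k) → F, (Fintype.card F).choose (k - 1) := by
        gcongr with r
        exact (Nat.mul_le_mul_right _ (card_le_card (hfiber r))).trans
          (card_vRec_fiber_mul_choose_le hk (g r) r)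
    _ = Fintype.card F ^ (t - k) * (Fintype.card F).choose (k - 1) := by
        simp

end Extraction

/-- Corollary 5 of the paper: the probability (over a uniformly random feature
set `A` of size `t`) that `g` extracts from the single deterministic vault
record an element of `A` is at most
`q^{t−k}·C(q,k−1) / (C(q,t)·C(t−1,k−1))`, which is `O(q^{−1})` for fixed `t`. -/
theorem stmt9 {F : Type*} [Field F] [Fintype F] [DecidableEq F]
    (k t : ℕ) (hk : 1 ≤ k) (hkt : k ≤ t)
    (g : (Fin (t - k) → F) → F) :
    (Set.ncard { A : Finset F | A.card = t ∧ g (vRec t k A) ∈ A } : ℚ)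
      / (Set.ncard { A : Finset F | A.card = t } : ℚ)
      ≤ (((Fintype.card F) ^ (t - k) * (Fintype.card F).choose (k - 1) : ℕ) : ℚ)
        / ((((Fintype.card F).choose t * (t - 1).choose (k - 1) : ℕ)) : ℚ) := by
  have hchoose : ((t - 1).choose (k - 1) : ℚ) ≠ 0 := by
    exact_mod_cast (Nat.choose_pos (by omega)).ne'
  rw [Set.ncard_eq_toFinset_card', Set.ncard_eq_toFinset_card', Set.toFinset_ofPred,
    Set.toFinset_ofPred, univ_filter_card_eq, card_powersetCard, card_univ,
    ← mul_div_mul_right _ _ hchoose, ← Nat.cast_mul, ← Nat.cast_mul]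
  exact div_le_div_of_nonneg_right (mod_cast card_extract_mul_choose_le hk g) (Nat.cast_nonneg _)
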